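/- For any skew-symmetric n×n payoff matrix P (i.e., Pᵀ = −P), the logit quantal response equilibrium is symmetric: if (u*, v*) is the unique saddle point of the entropy-regularized game, then u* = v*. -/
import Mathlib


open Finset Matrix

lemma skew_bilinear {n : ℕ} (P : Matrix (Fin n) (Fin n) ℝ) (hP : Pᵀ = -P)
    (a b : Fin n → ℝ) :
    (∑ i, ∑ j, a i * P i j * b j) = -∑ i, ∑ j, b i * P i j * a j := by
  rw [Finset.sum_comm]
  rw [← Finset.sum_neg_distrib]
  refine Finset.sum_congr rfl fun j _ => ?_
  rw [← Finset.sum_neg_distrib]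
  refine Finset.sum_congr rfl fun i _ => ?_
  have : P i j = -(P j i) := by
    have := congrFun (congrFun hP j) i
    simpa [Matrix.transpose_apply] using this
  rw [this]; ring

theorem skew_symmetric_QRE_is_symmetric
    (n : ℕ) (P : Matrix (Fin n) (Fin n) ℝ) (hP : Pᵀ = -P)
    (u v : Fin n → ℝ)
    (hu : (∀ i, 0 < u i) ∧ ∑ i, u i = 1)
    (hv : (∀ j, 0 < v j) ∧ ∑ j, v j = 1)
    (hsaddle :
      ∀ u' : Fin n → ℝ, (∀ i, 0 ≤ u' i) → ∑ i, u' i = 1 →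
      ∀ v' : Fin n → ℝ, (∀ j, 0 ≤ v' j) → ∑ j, v' j = 1 →
        ((∑ i, ∑ j, u i * P i j * v' j)
          + (∑ i, u i * Real.log (u i)) - (∑ j, v' j * Real.log (v' j)) ≤
         (∑ i, ∑ j, u i * P i j * v j)
          + (∑ i, u i * Real.log (u i)) - (∑ j, v j * Real.log (v j))) ∧
        ((∑ i, ∑ j, u i * P i j * v j)
          + (∑ i, u i * Real.log (u i)) - (∑ j, v j * Real.log (v j)) ≤
         (∑ i, ∑ j, u' i * P i j * v j)
          + (∑ i, u' i * Real.log (u' i)) - (∑ j, v j * Real.log (v j))))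
    (huniq :
      ∀ u₀ v₀ : Fin n → ℝ,
        ((∀ i, 0 ≤ u₀ i) ∧ ∑ i, u₀ i = 1) →
        ((∀ j, 0 ≤ v₀ j) ∧ ∑ j, v₀ j = 1) →
        (∀ u' : Fin n → ℝ, (∀ i, 0 ≤ u' i) → ∑ i, u' i = 1 →
         ∀ v' : Fin n → ℝ, (∀ j, 0 ≤ v' j) → ∑ j, v' j = 1 →
          ((∑ i, ∑ j, u₀ i * P i j * v' j)
            + (∑ i, u₀ i * Real.log (u₀ i)) - (∑ j, v' j * Real.log (v' j)) ≤
           (∑ i, ∑ j, u₀ i * P i j * v₀ j)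
            + (∑ i, u₀ i * Real.log (u₀ i)) - (∑ j, v₀ j * Real.log (v₀ j))) ∧
          ((∑ i, ∑ j, u₀ i * P i j * v₀ j)
            + (∑ i, u₀ i * Real.log (u₀ i)) - (∑ j, v₀ j * Real.log (v₀ j)) ≤
           (∑ i, ∑ j, u' i * P i j * v₀ j)
            + (∑ i, u' i * Real.log (u' i)) - (∑ j, v₀ j * Real.log (v₀ j)))) →
        u₀ = u ∧ v₀ = v) :
    u = v := by
  obtain ⟨hupos, husum⟩ := hu
  obtain ⟨hvpos, hvsum⟩ := hv
  have hu0 : ∀ i, 0 ≤ u i := fun i => (hupos i).le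
  have hv0 : ∀ j, 0 ≤ v j := fun j => (hvpos j).le
  have key := huniq v u ⟨hv0, hvsum⟩ ⟨hu0, husum⟩ ?_
  · exact key.2
  intro u' hu' hu's v' hv' hv's
  constructor
  · -- f(v,v') ≤ f(v,u), from f(u,v) ≤ f(v',v)
    have h := (hsaddle v' hv' hv's v hv0 hvsum).2
    rw [skew_bilinear P hP v v', skew_bilinear P hP v u]
    linarith
  · -- f(v,u) ≤ f(u',u), from f(u,u') ≤ f(u,v)
    have h := (hsaddle u hu0 husum u' hu' hu's).1
    rw [skew_bilinear P hP v u, skew_bilinear P hP u' u]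
    linarith
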